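/- Let a, b ∈ (1/4, 1/2) satisfy a + 2b > 1. Then sup_{(ξ,τ)∈ℝ²} ⟨τ+ξ²⟩^{−a} ( ∫_{D(ξ,τ)} ⟨τ−τ₁+(ξ−ξ₁)²⟩^{−2b} ⟨τ₁−ξ₁³⟩^{−2b} dξ₁ dτ₁ )^{1/2} < ∞, where D(ξ,τ) = {(ξ₁,τ₁) ∈ ℝ² : ⟨τ+ξ²⟩ ≥ ⟨τ₁−ξ₁³⟩ and ⟨τ+ξ²⟩ ≥ ⟨τ−τ₁+(ξ−ξ₁)²⟩}. -/

import Mathlib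

/-!
On `D(ξ,τ)` all three brackets are at most `M = ⟨τ+ξ²⟩`, and their arguments sum up to the
resonance function `ξ₁ (ξ₁² - ξ₁ + 2ξ)`, which is therefore at most `3M` in absolute value.
Hence `ξ₁` lies within `(3M)^{1/3}` of one of the three roots of this cubic, a set of measure
`O(M^{1/3})`. By AM-GM the integrand is at most `⟨τ-τ₁+(ξ-ξ₁)²⟩^{-4b} + ⟨τ₁-ξ₁³⟩^{-4b}`, whose
integral in `τ₁` is a constant because `4b > 1`. So the integral over `D(ξ,τ)` is `O(M^{1/3})`,
and `M^{-a} (M^{1/3})^{1/2} ≤ 1` since `a ≥ 1/6`.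
-/

open MeasureTheory Real Set

noncomputable section

/-- Japanese bracket `⟨c⟩ = 1 + |c|`. -/
def jb (c : ℝ) : ℝ := 1 + |c|

open Metric

lemma jb_pos (c : ℝ) : 0 < jb c := by
  unfold jb; positivity

lemma abs_le_jb_sub_one (c : ℝ) : |c| ≤ jb c - 1 := by
  unfold jb; linarith

lemma jb_neg (c : ℝ) : jb (-c) = jb c := by
  rw [jb, jb, abs_neg]

lemma continuous_jb : Continuous jb :=
  continuous_const.add continuous_abs

lemma integrable_jb_rpow_neg {p : ℝ} (hp : 1 < p) : Integrable fun t : ℝ => jb t ^ (-p) := by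
  simpa [jb] using integrable_one_add_norm (E := ℝ) (μ := volume) (r := p) (by simpa using hp)

lemma rpow_mul_rpow_le_rpow_two_mul_add {x y : ℝ} (hx : 0 ≤ x) (hy : 0 ≤ y) (r : ℝ) :
    x ^ r * y ^ r ≤ x ^ (2 * r) + y ^ (2 * r) := by
  have hx' : x ^ (2 * r) = (x ^ r) ^ 2 := by rw [mul_comm, rpow_mul hx]; norm_cast
  have hy' : y ^ (2 * r) = (y ^ r) ^ 2 := by rw [mul_comm, rpow_mul hy]; norm_cast
  rw [hx', hy']
  nlinarith [two_mul_le_add_sq (x ^ r) (y ^ r), rpow_nonneg hx r, rpow_nonneg hy r]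

lemma exists_abs_sub_mul_abs_sub_le_abs_quadratic (β γ : ℝ) :
    ∃ u v : ℝ, ∀ x : ℝ, |x - u| * |x - v| ≤ |x ^ 2 + β * x + γ| := by
  rcases le_or_gt 0 (β ^ 2 - 4 * γ) with hdisc | hdisc
  · refine ⟨(-β + √(β ^ 2 - 4 * γ)) / 2, (-β - √(β ^ 2 - 4 * γ)) / 2, fun x => le_of_eq ?_⟩
    rw [← abs_mul]
    congr 1
    linear_combination (-(1 : ℝ) / 4) * sq_sqrt hdisc
  · refine ⟨-β / 2, -β / 2, fun x => ?_⟩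
    rw [← abs_mul, abs_of_nonneg (mul_self_nonneg _)]
    exact le_abs.2 (Or.inl (by nlinarith))

lemma mem_closedBall_union_of_abs_sub_mul_le {x u v w c : ℝ} (hc : 0 ≤ c)
    (h : |x - u| * |x - v| * |x - w| ≤ c ^ 3) :
    x ∈ closedBall u c ∪ closedBall v c ∪ closedBall w c := by
  simp only [mem_union, mem_closedBall, Real.dist_eq]
  by_contra! hfar
  obtain ⟨⟨hu, hv⟩, hw⟩ := hfar
  have : c * c * c < |x - u| * |x - v| * |x - w| :=
    mul_lt_mul'' (mul_lt_mul'' hu hv hc hc) hw (by positivity) hc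
  linarith

lemma volume_closedBall_union_closedBall_union_closedBall_le (u v w c : ℝ) :
    volume (closedBall u c ∪ closedBall v c ∪ closedBall w c) ≤ ENNReal.ofReal (6 * c) := by
  have h6 : ENNReal.ofReal (6 * c) = 3 * ENNReal.ofReal (2 * c) := by
    rw [show 6 * c = 3 * (2 * c) by ring, ENNReal.ofReal_mul (by norm_num), ENNReal.ofReal_ofNat]
  calc volume (closedBall u c ∪ closedBall v c ∪ closedBall w c)
      ≤ volume (closedBall u c) + volume (closedBall v c) + volume (closedBall w c) :=
        (measure_union_le _ _).trans (by gcongr; exact measure_union_le _ _)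
    _ = ENNReal.ofReal (6 * c) := by simp only [Real.volume_closedBall, h6]; ring

section Strip

variable {f φ : ℝ → ℝ} {T : Set ℝ}

lemma integrableOn_comp_sub_prod_univ (hf : Integrable f) (hfm : Measurable f)
    (hφ : Measurable φ) (hT : volume T ≠ ⊤) :
    IntegrableOn (fun q : ℝ × ℝ => f (q.2 - φ q.1)) (T ×ˢ univ) := by
  have hm : Measurable fun q : ℝ × ℝ => f (q.2 - φ q.1) :=
    hfm.comp (measurable_snd.sub (hφ.comp measurable_fst))
  rw [IntegrableOn, Measure.volume_eq_prod, ← Measure.prod_restrict, Measure.restrict_univ]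
  refine (integrable_prod_iff hm.aestronglyMeasurable).2
    ⟨ae_of_all _ fun x => hf.comp_sub_right (φ x), ?_⟩
  have hslice : ∀ x, ∫ y, ‖f (y - φ x)‖ = ∫ y, ‖f y‖ := fun x =>
    integral_sub_right_eq_self (fun y => ‖f y‖) (φ x)
  simp only [hslice]
  exact integrableOn_const hT

lemma setIntegral_comp_sub_prod_univ (hf : Integrable f) (hfm : Measurable f)
    (hφ : Measurable φ) (hT : volume T ≠ ⊤) :
    ∫ q in T ×ˢ univ, f (q.2 - φ q.1) = volume.real T * ∫ t, f t := by
  have hint := integrableOn_comp_sub_prod_univ hf hfm hφ hT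
  rw [Measure.volume_eq_prod] at hint ⊢
  rw [setIntegral_prod _ hint]
  simp only [Measure.restrict_univ, integral_sub_right_eq_self]
  rw [setIntegral_const, smul_eq_mul]

end Strip

/-- `D(ξ,τ)`, with `q = (ξ₁, τ₁)`. -/
def regionI (ξ τ : ℝ) : Set (ℝ × ℝ) :=
  {q | jb (q.2 - q.1 ^ 3) ≤ jb (τ + ξ ^ 2) ∧ jb (τ - q.2 + (ξ - q.1) ^ 2) ≤ jb (τ + ξ ^ 2)}

lemma abs_resonance_le_of_mem_regionI {ξ τ : ℝ} {q : ℝ × ℝ} (hq : q ∈ regionI ξ τ) :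
    |q.1 * (q.1 ^ 2 - q.1 + 2 * ξ)| ≤ 3 * jb (τ + ξ ^ 2) := by
  obtain ⟨h₁, h₂⟩ := hq
  have hres : q.1 * (q.1 ^ 2 - q.1 + 2 * ξ)
      = (τ + ξ ^ 2) - (q.2 - q.1 ^ 3) - (τ - q.2 + (ξ - q.1) ^ 2) := by ring
  rw [hres]
  linarith [abs_sub (τ + ξ ^ 2 - (q.2 - q.1 ^ 3)) (τ - q.2 + (ξ - q.1) ^ 2),
    abs_sub (τ + ξ ^ 2) (q.2 - q.1 ^ 3), abs_le_jb_sub_one (τ + ξ ^ 2),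
    abs_le_jb_sub_one (q.2 - q.1 ^ 3), abs_le_jb_sub_one (τ - q.2 + (ξ - q.1) ^ 2)]

lemma exists_regionI_subset_prod_univ (ξ τ : ℝ) : ∃ T : Set ℝ,
    volume T ≤ ENNReal.ofReal (6 * (3 * jb (τ + ξ ^ 2)) ^ (3⁻¹ : ℝ)) ∧
      regionI ξ τ ⊆ T ×ˢ univ := by
  set c := (3 * jb (τ + ξ ^ 2)) ^ (3⁻¹ : ℝ)
  have hc : 0 ≤ c := rpow_nonneg (by linarith [jb_pos (τ + ξ ^ 2)]) _
  have hc3 : c ^ 3 = 3 * jb (τ + ξ ^ 2) := by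
    simpa using rpow_inv_natCast_pow (n := 3) (by linarith [jb_pos (τ + ξ ^ 2)]) (by norm_num)
  obtain ⟨u, v, huv⟩ := exists_abs_sub_mul_abs_sub_le_abs_quadratic (-1) (2 * ξ)
  refine ⟨closedBall 0 c ∪ closedBall u c ∪ closedBall v c,
    volume_closedBall_union_closedBall_union_closedBall_le 0 u v c, fun q hq => ⟨?_, mem_univ _⟩⟩
  refine mem_closedBall_union_of_abs_sub_mul_le hc ?_
  calc |q.1 - 0| * |q.1 - u| * |q.1 - v| = |q.1| * (|q.1 - u| * |q.1 - v|) := by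
        rw [sub_zero, mul_assoc]
    _ ≤ |q.1| * |q.1 ^ 2 + -1 * q.1 + 2 * ξ| := by gcongr; exact huv q.1
    _ = |q.1 * (q.1 ^ 2 - q.1 + 2 * ξ)| := by rw [← abs_mul]; ring_nf
    _ ≤ c ^ 3 := hc3 ▸ abs_resonance_le_of_mem_regionI hq

lemma setIntegral_regionI_le {b : ℝ} (hb : 1 / 4 < b) (ξ τ : ℝ) :
    ∫ q in regionI ξ τ, jb (τ - q.2 + (ξ - q.1) ^ 2) ^ (-(2 * b)) * jb (q.2 - q.1 ^ 3) ^ (-(2 * b))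
      ≤ 12 * (∫ t, jb t ^ (-(4 * b))) * (3 * jb (τ + ξ ^ 2)) ^ (3⁻¹ : ℝ) := by
  set f : ℝ → ℝ := fun t => jb t ^ (-(4 * b))
  have hf0 : ∀ t, 0 ≤ f t := fun t => rpow_nonneg (jb_pos t).le _
  have hf : Integrable f := integrable_jb_rpow_neg (by linarith)
  have hfm : Measurable f :=
    (continuous_jb.rpow_const fun t => Or.inl (jb_pos t).ne').measurable
  obtain ⟨T, hTvol, hDT⟩ := exists_regionI_subset_prod_univ ξ τ
  have hT : volume T ≠ ⊤ := ne_top_of_le_ne_top ENNReal.ofReal_ne_top hTvol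
  set G : ℝ × ℝ → ℝ := fun q => f (q.2 - (τ + (ξ - q.1) ^ 2)) + f (q.2 - q.1 ^ 3)
  have hG0 : ∀ q, 0 ≤ G q := fun q => add_nonneg (hf0 _) (hf0 _)
  have hφ₁ : Measurable fun x : ℝ => τ + (ξ - x) ^ 2 := by fun_prop
  have hφ₂ : Measurable fun x : ℝ => x ^ 3 := by fun_prop
  have hG₁ := integrableOn_comp_sub_prod_univ hf hfm hφ₁ hT
  have hG₂ := integrableOn_comp_sub_prod_univ hf hfm hφ₂ hT
  have hG : IntegrableOn G (T ×ˢ univ) := hG₁.add hG₂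
  have hFG : ∀ q : ℝ × ℝ,
      jb (τ - q.2 + (ξ - q.1) ^ 2) ^ (-(2 * b)) * jb (q.2 - q.1 ^ 3) ^ (-(2 * b)) ≤ G q := by
    intro q
    rw [show τ - q.2 + (ξ - q.1) ^ 2 = -(q.2 - (τ + (ξ - q.1) ^ 2)) by ring, jb_neg]
    have h := rpow_mul_rpow_le_rpow_two_mul_add (jb_pos (q.2 - (τ + (ξ - q.1) ^ 2))).le
      (jb_pos (q.2 - q.1 ^ 3)).le (-(2 * b))
    rwa [show 2 * -(2 * b) = -(4 * b) by ring] at h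
  calc ∫ q in regionI ξ τ, jb (τ - q.2 + (ξ - q.1) ^ 2) ^ (-(2 * b)) * jb (q.2 - q.1 ^ 3) ^ (-(2 * b))
      ≤ ∫ q in regionI ξ τ, G q :=
        integral_mono_of_nonneg (ae_of_all _ fun q => mul_nonneg (rpow_nonneg (jb_pos _).le _)
          (rpow_nonneg (jb_pos _).le _)) (hG.mono_set hDT) (ae_of_all _ hFG)
    _ ≤ ∫ q in T ×ˢ univ, G q :=
        setIntegral_mono_set hG (ae_of_all _ hG0) hDT.eventuallyLE
    _ = 2 * volume.real T * ∫ t, f t := by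
        rw [integral_add hG₁ hG₂, setIntegral_comp_sub_prod_univ hf hfm hφ₁ hT,
          setIntegral_comp_sub_prod_univ hf hfm hφ₂ hT]
        ring
    _ ≤ 12 * (∫ t, f t) * (3 * jb (τ + ξ ^ 2)) ^ (3⁻¹ : ℝ) := by
        have := ENNReal.toReal_le_of_le_ofReal
          (mul_nonneg (by norm_num) (rpow_nonneg (by linarith [jb_pos (τ + ξ ^ 2)]) _)) hTvol
        have : 0 ≤ ∫ t, f t := integral_nonneg hf0
        rw [measureReal_def]
        nlinarith

lemma rpow_neg_mul_rpow_half_le {M X K a : ℝ} (hM : 1 ≤ M) (hK : 0 ≤ K) (ha : 1 / 6 ≤ a)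
    (hX₀ : 0 ≤ X) (hX : X ≤ K * M ^ (3⁻¹ : ℝ)) : M ^ (-a) * X ^ (1 / 2 : ℝ) ≤ K ^ (1 / 2 : ℝ) := by
  have hM₀ : 0 < M := by linarith
  calc M ^ (-a) * X ^ (1 / 2 : ℝ) ≤ M ^ (-a) * (K * M ^ (3⁻¹ : ℝ)) ^ (1 / 2 : ℝ) := by
        gcongr
    _ = K ^ (1 / 2 : ℝ) * M ^ (6⁻¹ - a) := by
        rw [mul_rpow hK (rpow_nonneg hM₀.le _), ← rpow_mul hM₀.le, sub_eq_neg_add, rpow_add hM₀]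
        norm_num
        ring
    _ ≤ K ^ (1 / 2 : ℝ) :=
        mul_le_of_le_one_right (rpow_nonneg hK _) (rpow_le_one_of_one_le_of_nonpos hM (by linarith))

theorem stmt2_general (a b : ℝ) (ha : a ∈ Set.Ioo (1/4 : ℝ) (1/2)) (hb : b ∈ Set.Ioo (1/4 : ℝ) (1/2)) :
    ∃ C : ℝ, ∀ ξ τ : ℝ,
      jb (τ + ξ ^ 2) ^ (-a) *
        (∫ q : ℝ × ℝ in {q : ℝ × ℝ |
            jb (q.2 - q.1 ^ 3) ≤ jb (τ + ξ ^ 2) ∧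
            jb (τ - q.2 + (ξ - q.1) ^ 2) ≤ jb (τ + ξ ^ 2)},
          jb (τ - q.2 + (ξ - q.1) ^ 2) ^ (-(2 * b)) * jb (q.2 - q.1 ^ 3) ^ (-(2 * b))) ^ (1/2 : ℝ)
        ≤ C := by
  set I := ∫ t, jb t ^ (-(4 * b))
  have hI : 0 ≤ I := integral_nonneg fun t => rpow_nonneg (jb_pos t).le _
  refine ⟨(12 * I * 3 ^ (3⁻¹ : ℝ)) ^ (1 / 2 : ℝ), fun ξ τ => ?_⟩
  have hM : 1 ≤ jb (τ + ξ ^ 2) := le_add_of_nonneg_right (abs_nonneg _)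
  refine rpow_neg_mul_rpow_half_le hM (by positivity) (by linarith [ha.1])
    (setIntegral_nonneg_of_ae ?_) ?_
  · exact ae_of_all _ fun q => mul_nonneg (rpow_nonneg (jb_pos _).le _) (rpow_nonneg (jb_pos _).le _)
  · calc _ ≤ 12 * I * (3 * jb (τ + ξ ^ 2)) ^ (3⁻¹ : ℝ) := setIntegral_regionI_le hb.1 ξ τ
      _ = 12 * I * 3 ^ (3⁻¹ : ℝ) * jb (τ + ξ ^ 2) ^ (3⁻¹ : ℝ) := by
        rw [mul_rpow (by norm_num) (by linarith)]; ring

/-- Region I estimate in the bilinear Schrödinger–KdV coupling estimate: for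
`a, b ∈ (1/4,1/2)` with `a + 2b > 1`, the sup over `(ξ,τ)` of
`⟨τ+ξ²⟩^{-a} (∫_{D(ξ,τ)} ⟨τ-τ₁+(ξ-ξ₁)²⟩^{-2b} ⟨τ₁-ξ₁³⟩^{-2b} dξ₁ dτ₁)^{1/2}` is finite,
where `D(ξ,τ)` consists of `(ξ₁,τ₁)` with `⟨τ+ξ²⟩ ≥ ⟨τ₁-ξ₁³⟩` and
`⟨τ+ξ²⟩ ≥ ⟨τ-τ₁+(ξ-ξ₁)²⟩`. -/
theorem stmt2 (a b : ℝ) (ha : a ∈ Set.Ioo (1/4 : ℝ) (1/2)) (hb : b ∈ Set.Ioo (1/4 : ℝ) (1/2))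
    (hab : 1 < a + 2 * b) :
    ∃ C : ℝ, ∀ ξ τ : ℝ,
      jb (τ + ξ ^ 2) ^ (-a) *
        (∫ q : ℝ × ℝ in {q : ℝ × ℝ |
            jb (q.2 - q.1 ^ 3) ≤ jb (τ + ξ ^ 2) ∧
            jb (τ - q.2 + (ξ - q.1) ^ 2) ≤ jb (τ + ξ ^ 2)},
          jb (τ - q.2 + (ξ - q.1) ^ 2) ^ (-(2 * b)) * jb (q.2 - q.1 ^ 3) ^ (-(2 * b))) ^ (1/2 : ℝ)
        ≤ C :=
  stmt2_general a b ha hb
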